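/- arXiv:2603.15886 — 2 statements merged into one kernel-verified Lean document; each statement's English description precedes it below -/
import Mathlib

section
/- Let U be an N×N unitary complex matrix and suppose some row j of U has at least two nonzero entries. Then there exists a vector z on the N-torus such that |(U z)_j| > 1; in particular U z does not lie on the N-torus. (Such a z is obtained by choosing z_k to be the unit-modulus phase aligning each nonzero entry U_{jk}, and otherwise z_k = 1, so that |(U z)_j| = Σ_k |U_{jk}| > 1 since the row has Euclidean norm 1 with at least two nonzero entries.) -/
/-- If a row of a unitary matrix `U` has at least two nonzero entries,
then there is a state `z` on the N-torus whose image under `U` leaves the N-torus: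
some coordinate of `U z` has modulus greater than 1. -/
theorem unitary_mixing_leaves_torus
    (N : ℕ) (U : Matrix (Fin N) (Fin N) ℂ)
    (hU : U ∈ Matrix.unitaryGroup (Fin N) ℂ)
    (j : Fin N)
    (hrow : ∃ k₁ k₂ : Fin N, k₁ ≠ k₂ ∧ U j k₁ ≠ 0 ∧ U j k₂ ≠ 0) :
    ∃ z : Fin N → ℂ, (∀ k, ‖z k‖ = 1) ∧
      1 < ‖(U.mulVec z) j‖ := by
  obtain ⟨k₁, k₂, hk, h1, h2⟩ := hrow
  set a : Fin N → ℝ := fun k => ‖U j k‖ with ha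
  -- row norm
  have hUU : U * star U = 1 := (Matrix.mem_unitaryGroup_iff).mp hU
  have hrownorm : ∑ k, (a k) ^ 2 = 1 := by
    have := congrArg (fun M => M j j) hUU
    simp only [Matrix.mul_apply, Matrix.one_apply_eq, Matrix.star_apply] at this
    have h2' : (∑ k, U j k * star (U j k)) = ((∑ k, (a k) ^ 2 : ℝ) : ℂ) := by
      push_cast
      refine Finset.sum_congr rfl fun k _ => ?_
      rw [show star (U j k) = (starRingEnd ℂ) (U j k) from rfl, Complex.mul_conj]
      norm_cast
      simp [ha, Complex.sq_norm]
    rw [h2'] at this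
    exact_mod_cast this
  refine ⟨fun k => if U j k = 0 then 1 else (starRingEnd ℂ) (U j k) / (a k : ℂ), ?_, ?_⟩
  · intro k
    by_cases h : U j k = 0
    · simp [h]
    · have hak : a k ≠ 0 := by simpa [ha, norm_ne_zero_iff] using h
      simp [h, map_div₀, Complex.norm_conj, Complex.norm_real, abs_of_nonneg
        (norm_nonneg _), ha, div_self hak]
  · have hterm : ∀ k, U j k * (if U j k = 0 then 1 else (starRingEnd ℂ) (U j k) / (a k : ℂ))
        = ((a k : ℝ) : ℂ) := by
      intro k
      by_cases h : U j k = 0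
      · simp [h, ha]
      · have hak : (a k : ℂ) ≠ 0 := by
          simpa [ha, norm_ne_zero_iff] using h
        rw [if_neg h]
        field_simp [h]
        rw [Complex.mul_conj']
    have hmul : (U.mulVec (fun k => if U j k = 0 then 1 else (starRingEnd ℂ) (U j k) / (a k : ℂ))) j
        = ((∑ k, a k : ℝ) : ℂ) := by
      simp only [Matrix.mulVec, dotProduct]
      push_cast
      exact Finset.sum_congr rfl fun k _ => hterm k
    rw [hmul]
    have hnonneg : ∀ k ∈ Finset.univ, (0:ℝ) ≤ a k := fun k _ => norm_nonneg _
    have hsumnn : (0:ℝ) ≤ ∑ k, a k := Finset.sum_nonneg hnonneg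
    rw [Complex.norm_real, Real.norm_eq_abs, abs_of_nonneg hsumnn]
    -- now prove 1 < ∑ a k, using ∑ (a k)^2 = 1 and two nonzero entries
    have hle1 : ∀ k, a k ≤ 1 := by
      intro k
      by_contra hlt
      push_neg at hlt
      have : (1:ℝ) < (a k)^2 := by nlinarith
      have hle : (a k)^2 ≤ ∑ i, (a i)^2 :=
        Finset.single_le_sum (f := fun i => (a i)^2) (fun i _ => sq_nonneg _) (Finset.mem_univ k)
      linarith [hrownorm]
    have ha1 : 0 < a k₁ := norm_pos_iff.mpr h1
    have ha2 : 0 < a k₂ := norm_pos_iff.mpr h2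
    have hlt1 : a k₁ < 1 := by
      by_contra hge
      push_neg at hge
      have h11 : a k₁ = 1 := le_antisymm (hle1 k₁) hge
      have hle : (a k₁)^2 + (a k₂)^2 ≤ ∑ i, (a i)^2 := by
        have := Finset.sum_le_sum_of_subset_of_nonneg
          (Finset.subset_univ {k₁, k₂}) (fun i _ _ => sq_nonneg (a i))
        simpa [Finset.sum_pair hk] using this
      nlinarith
    have hstrict : ∑ k, (a k)^2 < ∑ k, a k := by
      refine Finset.sum_lt_sum (fun k _ => ?_) ⟨k₁, Finset.mem_univ _, ?_⟩
      · nlinarith [hle1 k, norm_nonneg (U j k), (ha ▸ rfl : a k = ‖U j k‖)]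
      · nlinarith
    linarith [hrownorm]
end

section
/- Let N ≥ 1, let z ∈ ℂ^N lie on the N-torus, let W be the Hebbian weight matrix of z (W_{jk} = z_j·conj(z_k) for j ≠ k, W_{kk} = 0), and let δt > 0. Then the stored pattern z is a fixed point of the componentwise-normalized retrieval update: for every index k, (z_k + δt·(W z)_k)/|z_k + δt·(W z)_k| = z_k. -/
/-- The stored pattern `z` is a fixed point of the
componentwise-normalized Hebbian retrieval update
`w_k ↦ (w_k + δt·(W w)_k)/|w_k + δt·(W w)_k|`. -/
theorem hebbian_stored_pattern_fixed_point
    (N : ℕ) (hN : 1 ≤ N)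
    (z : Fin N → ℂ) (hz : ∀ k, ‖z k‖ = 1)
    (W : Matrix (Fin N) (Fin N) ℂ)
    (hW : ∀ j k, W j k = if j = k then 0 else z j * (starRingEnd ℂ) (z k))
    (δt : ℝ) (hδt : 0 < δt) :
    ∀ k, (z k + (δt : ℂ) * (W.mulVec z) k) /
        (‖z k + (δt : ℂ) * (W.mulVec z) k‖ : ℂ) = z k := by
  intro k
  have hzz : ∀ j, (starRingEnd ℂ) (z j) * z j = 1 := by
    intro j
    rw [← Complex.normSq_eq_conj_mul_self, Complex.normSq_eq_norm_sq, hz j]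
    norm_num
  have hmv : (W.mulVec z) k = ((N : ℂ) - 1) * z k := by
    unfold Matrix.mulVec dotProduct
    have : ∀ j, W k j * z j = if k = j then 0 else z k := by
      intro j
      rw [hW k j]
      by_cases h : k = j
      · simp [h]
      · simp only [h, if_false]
        rw [mul_assoc, hzz j, mul_one]
    simp only [this]
    rw [Finset.sum_ite, Finset.sum_const, Finset.sum_const]
    simp only [smul_zero, zero_add, Finset.filter_ne, Finset.card_erase_of_mem (Finset.mem_univ k), Finset.card_univ, Fintype.card_fin, nsmul_eq_mul]
    have h1 : (1:ℕ) ≤ N := hN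
    push_cast [Nat.cast_sub h1]
    ring
  rw [hmv]
  have key : z k + (δt : ℂ) * (((N : ℂ) - 1) * z k) = ((1 + δt * ((N:ℝ) - 1) : ℝ) : ℂ) * z k := by
    push_cast
    ring
  rw [key]
  have hpos : (0:ℝ) < 1 + δt * ((N:ℝ) - 1) := by
    have : (1:ℝ) ≤ (N:ℝ) := by exact_mod_cast hN
    nlinarith
  rw [norm_mul, Complex.norm_real, Real.norm_eq_abs, hz k, mul_one, abs_of_pos hpos]
  rw [mul_comm, mul_div_assoc, div_self (by exact_mod_cast hpos.ne' : ((1 + δt * ((N:ℝ)-1) : ℝ):ℂ) ≠ 0), mul_one]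
end
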